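/- Let u be a fixed nonempty finite binary word with length ℓ and height h, and set Φ(u) := −φ(u)/3^h ∈ ℤ₂. Then the set of all x ∈ ℤ₂ such that the prefix of length ℓ of the parity vector of x equals u is exactly {Φ(u) + (2^ℓ/3^h)·y : y ∈ ℤ₂}. -/

import Mathlib

/-- Height of a finite binary word: the number of `1`s (`true`s). -/
def wordHeight (u : List Bool) : ℕ := u.count true

/-- Auxiliary function realizing the recursion of `φ` on the reversed word. -/
def phiAux : List Bool → ℕ
  | [] => 0
  | b :: r => if b then 3 * phiAux r + 2 ^ r.length else phiAux r

/-- The function `φ` on finite binary words: `φ(ε)=0`, `φ(u0)=φ(u)`,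
`φ(u1)=3φ(u)+2^{ℓ(u)}`. -/
def phi (u : List Bool) : ℕ := phiAux u.reverse

/-- The prefix of length `ℓ` of the parity vector of `x ∈ ℤ₂` under the map `T`:
its `k`-th digit is `T^k(x) mod 2`. -/
noncomputable def parityPrefix (T : ℤ_[2] → ℤ_[2]) (x : ℤ_[2]) (ℓ : ℕ) : List Bool :=
  (List.range ℓ).map fun k => decide (PadicInt.toZMod (T^[k] x) = 1)

/-!
If the first `ℓ` parity digits of `x` are those of `u`, unrolling the recursion of `T` gives
`2^ℓ · T^ℓ(x) = 3^h · x + φ(u)`, so `2^ℓ` divides `3^h · x + φ(u)`. Conversely, this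
divisibility determines the parity digits one at a time: dividing out `2^k` at step `k`
leaves `T^k(x)` or `3 · T^k(x) + 1`, and its parity is forced. Since `3` is a unit in `ℤ₂`,
solving `3^h · x + φ(u) = 2^ℓ · y` for `x` gives the stated parametrisation.
-/

namespace PadicInt

variable {p : ℕ} [Fact p.Prime]

theorem natCast_dvd_iff_toZMod_eq_zero (y : ℤ_[p]) : (p : ℤ_[p]) ∣ y ↔ toZMod y = 0 := by
  rw [← RingHom.mem_ker, ker_toZMod, maximalIdeal_eq_span_p, Ideal.mem_span_singleton]

theorem isUnit_of_toZMod_ne_zero {y : ℤ_[p]} (hy : toZMod y ≠ 0) : IsUnit y := by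
  by_contra h
  exact hy (by rwa [← RingHom.mem_ker, ker_toZMod, IsLocalRing.mem_maximalIdeal, mem_nonunits_iff])

end PadicInt

open PadicInt

theorem isUnit_three_padicInt_two : IsUnit (3 : ℤ_[2]) :=
  isUnit_of_toZMod_ne_zero (by rw [map_ofNat]; decide)

theorem two_dvd_ite_iff_parity (z : ℤ_[2]) (b : Bool) :
    2 ∣ (if b then 3 * z + 1 else z) ↔ decide (toZMod z = 1) = b := by
  have h := natCast_dvd_iff_toZMod_eq_zero (p := 2)
  push_cast at h
  cases b <;> simp only [Bool.false_eq_true, ↓reduceIte, h, map_add, map_mul, map_ofNat,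
    map_one, decide_eq_true_iff, decide_eq_false_iff_not] <;>
    generalize toZMod z = t <;> revert t <;> decide

theorem dvd_mul_add_iff_mem_range {R : Type*} [CommRing R] {c : R} (hc : IsUnit c)
    (a d x : R) :
    a ∣ c * x + d ↔ x ∈ Set.range (fun y => -d * Ring.inverse c + a * Ring.inverse c * y) := by
  have hinv : Ring.inverse c * c = 1 := Ring.inverse_mul_cancel c hc
  constructor
  · rintro ⟨y, hy⟩
    exact ⟨y, by linear_combination Ring.inverse c * hy.symm + x * hinv⟩
  · rintro ⟨y, rfl⟩
    exact ⟨y, by linear_combination (-d + a * y) * hinv⟩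

noncomputable def wordAffine (u : List Bool) (x : ℤ_[2]) : ℤ_[2] := 3 ^ wordHeight u * x + phi u

theorem wordAffine_nil (x : ℤ_[2]) : wordAffine [] x = x := by
  simp [wordAffine, wordHeight, phi, phiAux]

theorem wordAffine_append_singleton (w : List Bool) (b : Bool) (x : ℤ_[2]) :
    wordAffine (w ++ [b]) x = if b then 3 * wordAffine w x + 2 ^ w.length else wordAffine w x := by
  cases b <;> simp [wordAffine, wordHeight, phi, phiAux]; ring

@[simp]
theorem length_parityPrefix (T : ℤ_[2] → ℤ_[2]) (x : ℤ_[2]) (ℓ : ℕ) :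
    (parityPrefix T x ℓ).length = ℓ := by
  simp [parityPrefix]

theorem parityPrefix_succ (T : ℤ_[2] → ℤ_[2]) (x : ℤ_[2]) (ℓ : ℕ) :
    parityPrefix T x (ℓ + 1) = parityPrefix T x ℓ ++ [decide (toZMod (T^[ℓ] x) = 1)] := by
  simp [parityPrefix, List.range_succ]

section CollatzMap

variable {T : ℤ_[2] → ℤ_[2]}
  (hT : ∀ x : ℤ_[2], 2 * T x = if toZMod x = 1 then 3 * x + 1 else x)
include hT

theorem two_pow_mul_iterate_eq_wordAffine (x : ℤ_[2]) (ℓ : ℕ) :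
    2 ^ ℓ * T^[ℓ] x = wordAffine (parityPrefix T x ℓ) x := by
  induction ℓ with
  | zero => simp [parityPrefix, wordAffine_nil]
  | succ ℓ ih =>
    rw [parityPrefix_succ, wordAffine_append_singleton, ← ih, length_parityPrefix,
      Function.iterate_succ_apply', pow_succ, mul_assoc, hT]
    simp only [decide_eq_true_eq]
    split_ifs <;> ring

theorem parityPrefix_eq_of_dvd_wordAffine (u : List Bool) (x : ℤ_[2])
    (hdvd : 2 ^ u.length ∣ wordAffine u x) : parityPrefix T x u.length = u := by
  induction u using List.reverseRecOn with
  | nil => simp [parityPrefix]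
  | append_singleton w b ih =>
    rw [List.length_append, List.length_singleton, wordAffine_append_singleton] at hdvd
    have hw : parityPrefix T x w.length = w := by
      refine ih ?_
      have h := (pow_dvd_pow 2 w.length.le_succ).trans hdvd
      cases b
      · exact h
      · exact isUnit_three_padicInt_two.dvd_mul_left.1 ((dvd_add_left (dvd_refl _)).1 h)
    have hz := two_pow_mul_iterate_eq_wordAffine hT x w.length
    rw [hw] at hz
    have hfactor : (if b then 3 * wordAffine w x + 2 ^ w.length else wordAffine w x) =
        2 ^ w.length * (if b then 3 * T^[w.length] x + 1 else T^[w.length] x) := by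
      rw [← hz]; split_ifs <;> ring
    rw [hfactor, pow_succ, mul_dvd_mul_iff_left (pow_ne_zero _ two_ne_zero),
      two_dvd_ite_iff_parity] at hdvd
    rw [List.length_append, List.length_singleton, parityPrefix_succ, hw, hdvd]

theorem parityPrefix_eq_iff_dvd_wordAffine (u : List Bool) (x : ℤ_[2]) :
    parityPrefix T x u.length = u ↔ 2 ^ u.length ∣ wordAffine u x := by
  refine ⟨fun h => ⟨T^[u.length] x, ?_⟩, parityPrefix_eq_of_dvd_wordAffine hT u x⟩
  rw [two_pow_mul_iterate_eq_wordAffine hT, h]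

end CollatzMap

theorem stmt5_general (T : ℤ_[2] → ℤ_[2])
    (hT : ∀ x : ℤ_[2], 2 * T x = if PadicInt.toZMod x = 1 then 3 * x + 1 else x)
    (u : List Bool) :
    {x : ℤ_[2] | parityPrefix T x u.length = u} =
      Set.range (fun y : ℤ_[2] =>
        -(phi u : ℤ_[2]) * Ring.inverse ((3 : ℤ_[2]) ^ wordHeight u) +
          (2 : ℤ_[2]) ^ u.length * Ring.inverse ((3 : ℤ_[2]) ^ wordHeight u) * y) := by
  ext x
  rw [Set.mem_ofPred_eq, parityPrefix_eq_iff_dvd_wordAffine hT, wordAffine,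
    dvd_mul_add_iff_mem_range (isUnit_three_padicInt_two.pow _)]

/-- If `T` is the 3x+1 map on `ℤ₂`, `u` is a fixed nonempty finite binary word of
length `ℓ` and height `h`, and `Φ(u) = −φ(u)/3^h ∈ ℤ₂`, then the set of all
`x ∈ ℤ₂` whose parity vector has `u` as its length-`ℓ` prefix is exactly
`{Φ(u) + (2^ℓ/3^h)·y : y ∈ ℤ₂}`. -/
theorem stmt5 (T : ℤ_[2] → ℤ_[2])
    (hT : ∀ x : ℤ_[2], 2 * T x = if PadicInt.toZMod x = 1 then 3 * x + 1 else x)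
    (u : List Bool) (hu : u ≠ []) :
    {x : ℤ_[2] | parityPrefix T x u.length = u} =
      Set.range (fun y : ℤ_[2] =>
        -(phi u : ℤ_[2]) * Ring.inverse ((3 : ℤ_[2]) ^ wordHeight u) +
          (2 : ℤ_[2]) ^ u.length * Ring.inverse ((3 : ℤ_[2]) ^ wordHeight u) * y) :=
  stmt5_general T hT u
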